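/- arXiv:1412.3586 — 4 statements merged into one kernel-verified Lean document; each statement's English description precedes it below -/
import Mathlib

section
/- Let 0 → K →^φ G →^π H → 0 be a short exact sequence of abelian groups and let A be a G-graded algebra. Define the induced H-grading on A by A_h := ⊕_{g ∈ π⁻¹(h)} A_g, and the induced K-grading on A^{(K)} := ⊕_{k∈K} A_{φ(k)}. Then A is strongly G-graded if and only if the induced H-grading on A is strong and the induced K-grading on A^{(K)} is strong. -/
/-!
A graded algebra is strongly graded as soon as `1 ∈ A_{-g} A_g` for every `g`. If the induced
`H`-grading is strong, `1` lies in the product of the fibres over `-π g` and `π g`; by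
independence of the components, its degree-`0` part comes only from the products
`A_{-b} A_b` with `π b = π g`. Each of these is moved into `A_{-g} A_g` by inserting
`1 ∈ A_{-φ k} A_{φ k}` with `φ k = g - b`, which the strong `K`-grading provides.
The converse is a direct computation of fibre products.
-/

lemma Submodule.biSup_mul_biSup {R A ι : Type*} [CommSemiring R] [Semiring A] [Algebra R A]
    (𝒜 : ι → Submodule R A) (s t : Set ι) :
    (⨆ a ∈ s, 𝒜 a) * (⨆ b ∈ t, 𝒜 b) = ⨆ a ∈ s, ⨆ b ∈ t, 𝒜 a * 𝒜 b := by
  simp only [Submodule.iSup_mul]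
  simp only [Submodule.mul_iSup]

lemma iSupIndep.mem_of_mem_sup_iSup_ne {R M ι : Type*} [Ring R] [AddCommGroup M] [Module R M]
    {𝒜 : ι → Submodule R M} (hind : iSupIndep 𝒜) {i : ι} {S : Submodule R M}
    (hS : S ≤ 𝒜 i) {x : M} (hxi : x ∈ 𝒜 i) (hx : x ∈ S ⊔ ⨆ j ≠ i, 𝒜 j) : x ∈ S := by
  obtain ⟨s, hs, y, hy, rfl⟩ := Submodule.mem_sup.mp hx
  have hyi : y ∈ 𝒜 i := by simpa using sub_mem hxi (hS hs)
  rwa [Submodule.disjoint_def.mp (hind i) y hyi hy, add_zero]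

namespace GradedAlgebra

section Semiring

variable {R A G : Type*} [CommSemiring R] [Semiring A] [Algebra R A] [AddCommGroup G]
  {𝒜 : G → Submodule R A}

lemma mul_le_mul_shift (hmul : ∀ g g', 𝒜 g * 𝒜 g' ≤ 𝒜 (g + g')) {d : G}
    (hd : 1 ≤ 𝒜 (-d) * 𝒜 d) (a b : G) : 𝒜 a * 𝒜 b ≤ 𝒜 (a - d) * 𝒜 (d + b) :=
  calc 𝒜 a * 𝒜 b = 𝒜 a * 1 * 𝒜 b := by rw [mul_one]
    _ ≤ 𝒜 a * (𝒜 (-d) * 𝒜 d) * 𝒜 b := by gcongr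
    _ = (𝒜 a * 𝒜 (-d)) * (𝒜 d * 𝒜 b) := by simp only [mul_assoc]
    _ ≤ 𝒜 (a - d) * 𝒜 (d + b) := by
      rw [sub_eq_add_neg]; exact mul_le_mul' (hmul _ _) (hmul _ _)

lemma mul_eq_of_one_le_neg_mul (hone : 1 ≤ 𝒜 0) (hmul : ∀ g g', 𝒜 g * 𝒜 g' ≤ 𝒜 (g + g'))
    (hunit : ∀ g, 1 ≤ 𝒜 (-g) * 𝒜 g) (g g' : G) : 𝒜 g * 𝒜 g' = 𝒜 (g + g') := by
  refine le_antisymm (hmul g g') ?_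
  calc 𝒜 (g + g') = 𝒜 (g + g') * 1 := (mul_one _).symm
    _ ≤ 𝒜 (g + g') * 𝒜 0 := by gcongr
    _ ≤ 𝒜 (g + g' - g') * 𝒜 (g' + 0) := mul_le_mul_shift hmul (hunit g') _ _
    _ = 𝒜 g * 𝒜 g' := by rw [add_sub_cancel_right, add_zero]

lemma biSup_mul_biSup_le_sup_iSup_ne_zero (hmul : ∀ g g', 𝒜 g * 𝒜 g' ≤ 𝒜 (g + g'))
    {s t : Set G} {S : Submodule R A}
    (hS : ∀ a ∈ s, ∀ b ∈ t, a + b = 0 → 𝒜 a * 𝒜 b ≤ S) :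
    (⨆ a ∈ s, 𝒜 a) * (⨆ b ∈ t, 𝒜 b) ≤ S ⊔ ⨆ c ≠ 0, 𝒜 c := by
  rw [Submodule.biSup_mul_biSup]
  refine iSup₂_le fun a ha => iSup₂_le fun b hb => ?_
  by_cases hab : a + b = 0
  · exact le_sup_of_le_left (hS a ha b hb hab)
  · exact le_sup_of_le_right ((hmul a b).trans (le_iSup₂_of_le (a + b) hab le_rfl))

lemma biSup_fiber_mul_biSup_fiber {H : Type*} [AddCommGroup H] (π : G →+ H)
    (hπ : Function.Surjective π) (hstrong : ∀ g g', 𝒜 g * 𝒜 g' = 𝒜 (g + g')) (h h' : H) :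
    (⨆ g ∈ π ⁻¹' {h}, 𝒜 g) * (⨆ g ∈ π ⁻¹' {h'}, 𝒜 g) = ⨆ g ∈ π ⁻¹' {h + h'}, 𝒜 g := by
  rw [Submodule.biSup_mul_biSup]
  apply le_antisymm
  · refine iSup₂_le fun a ha => iSup₂_le fun b hb => ?_
    have hab : π (a + b) = h + h' := by rw [map_add, ha, hb]
    rw [hstrong]
    exact le_iSup₂_of_le (f := fun g (_ : g ∈ π ⁻¹' {h + h'}) => 𝒜 g) (a + b) hab le_rfl
  · refine iSup₂_le fun c hc => ?_
    obtain ⟨a, rfl⟩ := hπ h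
    have hca : π (c - a) = h' := by
      rw [map_sub, show π c = π a + h' from hc, add_sub_cancel_left]
    rw [← add_sub_cancel a c, ← hstrong]
    exact le_iSup₂_of_le (f := fun g (_ : g ∈ π ⁻¹' {π a}) => ⨆ b ∈ π ⁻¹' {h'}, 𝒜 g * 𝒜 b) a rfl
      (le_iSup₂_of_le (f := fun b (_ : b ∈ π ⁻¹' {h'}) => 𝒜 a * 𝒜 b) (c - a) hca le_rfl)

end Semiring

variable {R A G K H : Type*} [CommRing R] [Ring A] [Algebra R A]
  [AddCommGroup G] [AddCommGroup K] [AddCommGroup H] {𝒜 : G → Submodule R A}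

lemma one_le_neg_mul_of_induced_strong (φ : K →+ G) (π : G →+ H)
    (hker : ∀ g, π g = 0 → g ∈ φ.range) (hind : iSupIndep 𝒜)
    (hone : 1 ≤ 𝒜 0) (hmul : ∀ g g', 𝒜 g * 𝒜 g' ≤ 𝒜 (g + g'))
    (hH : ∀ h h' : H, (⨆ g ∈ π ⁻¹' {h}, 𝒜 g) * (⨆ g ∈ π ⁻¹' {h'}, 𝒜 g)
      = ⨆ g ∈ π ⁻¹' {h + h'}, 𝒜 g)
    (hK : ∀ k k' : K, 𝒜 (φ k) * 𝒜 (φ k') = 𝒜 (φ (k + k'))) (g : G) :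
    1 ≤ 𝒜 (-g) * 𝒜 g := by
  have hφ : ∀ k, 1 ≤ 𝒜 (-φ k) * 𝒜 (φ k) := fun k => by
    rwa [← map_neg, hK, neg_add_cancel, map_zero]
  have hfibre : ∀ a ∈ π ⁻¹' {-π g}, ∀ b ∈ π ⁻¹' {π g}, a + b = 0 →
      𝒜 a * 𝒜 b ≤ 𝒜 (-g) * 𝒜 g := by
    intro a _ b hb hab
    obtain ⟨k, hk⟩ := hker (g - b) (by rw [map_sub, sub_eq_zero]; exact hb.symm)
    have hshift := mul_le_mul_shift hmul (hk ▸ hφ k) a b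
    have hag : a - (g - b) = -g := by rw [eq_neg_of_add_eq_zero_left hab]; abel
    rwa [hag, sub_add_cancel] at hshift
  have h1 : (1 : A) ∈ (⨆ a ∈ π ⁻¹' {-π g}, 𝒜 a) * (⨆ b ∈ π ⁻¹' {π g}, 𝒜 b) := by
    rw [hH, neg_add_cancel]
    exact le_iSup₂_of_le (f := fun c (_ : c ∈ π ⁻¹' {0}) => 𝒜 c) 0 (map_zero π) hone
      (Submodule.one_le.mp le_rfl)
  have hdeg0 : 𝒜 (-g) * 𝒜 g ≤ 𝒜 0 := by simpa using hmul (-g) g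
  exact Submodule.one_le.mpr <| hind.mem_of_mem_sup_iSup_ne hdeg0 (Submodule.one_le.mp hone)
    (biSup_mul_biSup_le_sup_iSup_ne_zero hmul hfibre h1)

end GradedAlgebra

open GradedAlgebra in
theorem strongly_graded_iff_induced_gradings_strong_general
    {K G H : Type} [AddCommGroup K] [AddCommGroup G] [AddCommGroup H] [DecidableEq G]
    (φ : K →+ G) (π : G →+ H)
    (hπ : Function.Surjective π)
    (hexact : ∀ g, π g = 0 ↔ g ∈ φ.range)
    {A : Type} [Ring A] [Algebra ℂ A]
    (𝒜 : G → Submodule ℂ A)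
    (hinternal : DirectSum.IsInternal 𝒜)
    (hone : (1 : A) ∈ 𝒜 0)
    (hmul : ∀ g g', 𝒜 g * 𝒜 g' ≤ 𝒜 (g + g')) :
    (∀ g g', 𝒜 g * 𝒜 g' = 𝒜 (g + g')) ↔
      ((∀ h h' : H, (⨆ g ∈ π ⁻¹' {h}, 𝒜 g) * (⨆ g ∈ π ⁻¹' {h'}, 𝒜 g)
          = ⨆ g ∈ π ⁻¹' {h + h'}, 𝒜 g) ∧
       (∀ k k' : K, 𝒜 (φ k) * 𝒜 (φ k') = 𝒜 (φ (k + k')))) := by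
  have hone_le : 1 ≤ 𝒜 0 := Submodule.one_le.mpr hone
  constructor
  · intro hstrong
    exact ⟨biSup_fiber_mul_biSup_fiber π hπ hstrong, fun k k' => by rw [map_add, hstrong]⟩
  · rintro ⟨hH, hK⟩
    exact mul_eq_of_one_le_neg_mul hone_le hmul <| one_le_neg_mul_of_induced_strong φ π
      (fun g => (hexact g).mp) hinternal.submodule_iSupIndep hone_le hmul hH hK

/-- for a short exact sequence 0 → K → G → H → 0 of abelian groups,
a G-graded algebra A is strongly graded iff the induced H-grading on A and the
induced K-grading on A^{(K)} are strong. -/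
theorem strongly_graded_iff_induced_gradings_strong
    {K G H : Type} [AddCommGroup K] [AddCommGroup G] [AddCommGroup H] [DecidableEq G]
    (φ : K →+ G) (π : G →+ H)
    (hφ : Function.Injective φ) (hπ : Function.Surjective π)
    (hexact : ∀ g, π g = 0 ↔ g ∈ φ.range)
    {A : Type} [Ring A] [Algebra ℂ A]
    (𝒜 : G → Submodule ℂ A)
    (hinternal : DirectSum.IsInternal 𝒜)
    (hone : (1 : A) ∈ 𝒜 0)
    (hmul : ∀ g g', 𝒜 g * 𝒜 g' ≤ 𝒜 (g + g')) :
    (∀ g g', 𝒜 g * 𝒜 g' = 𝒜 (g + g')) ↔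
      ((∀ h h' : H, (⨆ g ∈ π ⁻¹' {h}, 𝒜 g) * (⨆ g ∈ π ⁻¹' {h'}, 𝒜 g)
          = ⨆ g ∈ π ⁻¹' {h + h'}, 𝒜 g) ∧
       (∀ k k' : K, 𝒜 (φ k) * 𝒜 (φ k') = 𝒜 (φ (k + k')))) :=
  strongly_graded_iff_induced_gradings_strong_general φ π hπ hexact 𝒜 hinternal hone hmul
end

section
/- Give O(S_q^{2n+1}) the ℤ_N-grading determined by |z_0| = 1 mod N and |z_i| = m_i mod N for i = 1,...,n (with |z_i*| = −|z_i|). Then this ℤ_N-grading is strong; equivalently, there exist finitely many homogeneous elements α_r of degree N−1 and β_r of degree 1 with ∑_r α_r β_r = 1, given explicitly by α_0 = α(a) z_0^{N−1}, α_1 = β(a) z_0*, β_0 = z_0*^{N−1}, β_1 = z_0, where α(a) z_0^{N−1} z_0*^{N−1} + β(a) z_0* z_0 = 1 via the Bézout lemma applied to coprime polynomials in a. -/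
/-- The defining relations of the coordinate algebra O(S_q^{2n+1}) of the quantum
(2n+1)-sphere, for elements z_0,...,z_n of a complex *-algebra. -/
def SphereRel (q : ℝ) {n : ℕ} {A : Type} [Ring A] [Algebra ℂ A] [StarRing A]
    (z : Fin (n + 1) → A) : Prop :=
  (∀ i j, i < j → z i * z j = (q : ℂ) • (z j * z i)) ∧
  (∀ i j, i ≠ j → z i * star (z j) = (q : ℂ) • (star (z j) * z i)) ∧
  (∀ i, z i * star (z i) = star (z i) * z i
      + ((((q : ℂ) ^ 2)⁻¹ - 1) • ∑ j ∈ Finset.Ioi i, z j * star (z j))) ∧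
  (∑ j, z j * star (z j) = 1)

/-!
With `a = ∑_{i ≥ 1} z_i z_i*`, the sphere relations give `z_0 a = q² a z_0`,
`z_0 z_0* = 1 - a` and `z_0* z_0 = 1 - q⁻² a`, hence
`z_0^k z_0*^k = ∏_{s<k} (1 - q^{2s} a)`. The polynomial `∏_{s<N-1} (1 - q^{2s} X)` does not
vanish at `q²`, the root of `1 - q⁻² X`, so Bézout gives `α, β` with
`α(a) z_0^{N-1} z_0*^{N-1} + β(a) z_0* z_0 = 1`: a resolution of identity by products of
elements of degrees `-1` and `1`. Multiplying such resolutions shows `1 ∈ 𝒜_{-g} 𝒜_g` for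
every `g ∈ ℤ_N`, and then `𝒜_{g+h} = 𝒜_{g+h} · 1 ⊆ 𝒜_{g+h} 𝒜_{-h} 𝒜_h ⊆ 𝒜_g 𝒜_h`.
-/

open Polynomial

section StrongGrading

variable {R A G : Type*} [CommSemiring R] [Semiring A] [Algebra R A] [AddGroup G]
  (𝒜 : G → Submodule R A) [SetLike.GradedMonoid 𝒜]

theorem SetLike.GradedMonoid.mul_le_add (g h : G) : 𝒜 g * 𝒜 h ≤ 𝒜 (g + h) :=
  Submodule.mul_le.2 fun _ hx _ hy => SetLike.mul_mem_graded hx hy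

theorem SetLike.GradedMonoid.one_mem_neg_add_mul_add {g h : G}
    (hg : (1 : A) ∈ 𝒜 (-g) * 𝒜 g) (hh : (1 : A) ∈ 𝒜 (-h) * 𝒜 h) :
    (1 : A) ∈ 𝒜 (-(g + h)) * 𝒜 (g + h) := by
  have hle : 𝒜 (-h) * 𝒜 h ≤ 𝒜 (-(g + h)) * 𝒜 (g + h) :=
    calc 𝒜 (-h) * 𝒜 h = 𝒜 (-h) * 1 * 𝒜 h := by rw [mul_one]
      _ ≤ 𝒜 (-h) * (𝒜 (-g) * 𝒜 g) * 𝒜 h := by gcongr; exact Submodule.one_le.2 hg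
      _ = 𝒜 (-h) * 𝒜 (-g) * (𝒜 g * 𝒜 h) := by simp only [mul_assoc]
      _ ≤ 𝒜 (-h + -g) * 𝒜 (g + h) := by gcongr <;> apply mul_le_add
      _ = 𝒜 (-(g + h)) * 𝒜 (g + h) := by rw [neg_add_rev]
  exact hle hh

theorem SetLike.GradedMonoid.mul_eq_add_of_one_mem (h1 : ∀ h, (1 : A) ∈ 𝒜 (-h) * 𝒜 h)
    (g h : G) : 𝒜 g * 𝒜 h = 𝒜 (g + h) := by
  refine le_antisymm (mul_le_add 𝒜 g h) ?_
  calc 𝒜 (g + h) = 𝒜 (g + h) * 1 := (mul_one _).symm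
    _ ≤ 𝒜 (g + h) * (𝒜 (-h) * 𝒜 h) := by gcongr; exact Submodule.one_le.2 (h1 h)
    _ = 𝒜 (g + h) * 𝒜 (-h) * 𝒜 h := (mul_assoc _ _ _).symm
    _ ≤ 𝒜 (g + h + -h) * 𝒜 h := by gcongr; apply mul_le_add
    _ = 𝒜 g * 𝒜 h := by rw [add_neg_cancel_right]

theorem SetLike.GradedMonoid.aeval_mem_zero {a : A} (ha : a ∈ 𝒜 0) (p : R[X]) :
    aeval a p ∈ 𝒜 0 :=
  Algebra.adjoin_le (s := {a}) (S := SetLike.GradeZero.subalgebra 𝒜)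
    (Set.singleton_subset_iff.2 ha) (aeval_mem_adjoin_singleton R a)

end StrongGrading

theorem ZMod.gradedMonoid_mul_eq_add_of_one_mem {R A : Type*} [CommSemiring R] [Semiring A]
    [Algebra R A] {N : ℕ} [NeZero N] (𝒜 : ZMod N → Submodule R A) [SetLike.GradedMonoid 𝒜]
    (h1 : (1 : A) ∈ 𝒜 (-1) * 𝒜 1) (g h : ZMod N) : 𝒜 g * 𝒜 h = 𝒜 (g + h) := by
  have hnat : ∀ k : ℕ, (1 : A) ∈ 𝒜 (-k) * 𝒜 k := by
    intro k
    induction k with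
    | zero =>
      simpa using Submodule.mul_mem_mul (SetLike.one_mem_graded 𝒜) (SetLike.one_mem_graded 𝒜)
    | succ k ih => push_cast; exact SetLike.GradedMonoid.one_mem_neg_add_mul_add 𝒜 ih h1
  exact SetLike.GradedMonoid.mul_eq_add_of_one_mem 𝒜 (fun h => by simpa using hnat h.val) g h

noncomputable def qPochhammer {R : Type*} [CommRing R] (c : R) (k : ℕ) : R[X] :=
  ∏ s ∈ Finset.range k, (1 - C (c ^ s) * X)

theorem qPochhammer_succ {R : Type*} [CommRing R] (c : R) (k : ℕ) :
    qPochhammer c (k + 1) = qPochhammer c k * (1 - C (c ^ k) * X) :=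
  Finset.prod_range_succ _ _

theorem qPochhammer_eval_self_ne_zero {K : Type*} [NormedField K] {c : K} (hc : ‖c‖ < 1)
    (k : ℕ) : (qPochhammer c k).eval c ≠ 0 := by
  rw [qPochhammer, eval_prod, Finset.prod_ne_zero_iff]
  intro s _ hs
  simp only [eval_sub, eval_one, eval_mul, eval_C, eval_X] at hs
  have hpow : c ^ (s + 1) = 1 := by rw [pow_succ]; exact (sub_eq_zero.1 hs).symm
  have hnorm : ‖c‖ ^ (s + 1) < 1 := pow_lt_one₀ (norm_nonneg c) hc s.succ_ne_zero
  simp [← norm_pow, hpow] at hnorm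

theorem isCoprime_one_sub_C_inv_mul_X {K : Type*} [Field K] {P : K[X]} {r : K} (hr : r ≠ 0)
    (hP : P.eval r ≠ 0) : IsCoprime P (1 - C r⁻¹ * X) := by
  have hfactor : 1 - C r⁻¹ * X = C (-r⁻¹) * (X - C r) := by
    rw [mul_sub, ← C_mul, neg_mul, inv_mul_cancel₀ hr]
    simp only [C_neg, C_1]; ring
  rw [hfactor, isCoprime_mul_unit_left_right (isUnit_C.2 (by simpa using hr))]
  exact ((irreducible_X_sub_C r).coprime_iff_not_dvd.2 (by rwa [dvd_iff_isRoot])).symm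

section Commutation

variable {R A : Type*} [CommRing R] [Ring A] [Algebra R A] {x y a : A} {c : R}

theorem pow_mul_eq_smul_mul_pow (hxa : x * a = c • (a * x)) (k : ℕ) :
    x ^ k * a = c ^ k • (a * x ^ k) := by
  induction k with
  | zero => simp
  | succ k ih =>
    rw [pow_succ, mul_assoc, hxa, mul_smul_comm, ← mul_assoc, ih, smul_mul_assoc, smul_smul,
      mul_assoc, ← pow_succ, ← pow_succ']

theorem pow_mul_pow_eq_aeval_qPochhammer (hxa : x * a = c • (a * x)) (hxy : x * y = 1 - a)
    (k : ℕ) : x ^ k * y ^ k = aeval a (qPochhammer c k) := by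
  induction k with
  | zero => simp [qPochhammer]
  | succ k ih =>
    have hcomm : Commute a (aeval a (qPochhammer c k)) := by
      simpa using (Commute.all X (qPochhammer c k)).map (aeval a)
    calc x ^ (k + 1) * y ^ (k + 1) = x ^ k * (x * y) * y ^ k := by
          rw [pow_succ, pow_succ', mul_assoc, mul_assoc, mul_assoc]
      _ = x ^ k * y ^ k - c ^ k • (a * (x ^ k * y ^ k)) := by
          rw [hxy, mul_sub, mul_one, sub_mul, pow_mul_eq_smul_mul_pow hxa, smul_mul_assoc,
            mul_assoc]
      _ = aeval a (qPochhammer c (k + 1)) := by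
          rw [ih, qPochhammer_succ, map_mul, map_sub, map_one, map_mul, aeval_C, aeval_X,
            ← Algebra.smul_def, mul_sub, mul_one, mul_smul_comm, hcomm.eq]

end Commutation

section Sphere

variable {q : ℝ} {n : ℕ} {A : Type} [Ring A] [Algebra ℂ A] [StarRing A]

def sphereTail (z : Fin (n + 1) → A) : A := ∑ i ∈ Finset.Ioi 0, z i * star (z i)

namespace SphereRel

variable {z : Fin (n + 1) → A}

theorem z_zero_mul_star (h : SphereRel q z) : z 0 * star (z 0) = 1 - sphereTail z := by
  refine eq_sub_of_add_eq ?_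
  rw [sphereTail, Fin.sum_Ioi_zero, ← Fin.sum_univ_succ (f := fun j => z j * star (z j))]
  exact h.2.2.2

theorem star_mul_z_zero (h : SphereRel q z) :
    star (z 0) * z 0 = 1 - ((q : ℂ) ^ 2)⁻¹ • sphereTail z := by
  have h0 := h.2.2.1 0
  rw [h.z_zero_mul_star] at h0
  calc star (z 0) * z 0 = 1 - sphereTail z - (((q : ℂ) ^ 2)⁻¹ - 1) • sphereTail z :=
        (sub_eq_of_eq_add h0).symm
    _ = 1 - ((q : ℂ) ^ 2)⁻¹ • sphereTail z := by rw [sub_smul, one_smul]; abel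

theorem z_zero_mul_sphereTail (h : SphereRel q z) :
    z 0 * sphereTail z = ((q : ℂ) ^ 2) • (sphereTail z * z 0) := by
  rw [sphereTail, Finset.mul_sum, Finset.sum_mul, Finset.smul_sum]
  refine Finset.sum_congr rfl fun j hj => ?_
  have hj0 : (0 : Fin (n + 1)) < j := Finset.mem_Ioi.mp hj
  calc z 0 * (z j * star (z j)) = (z 0 * z j) * star (z j) := (mul_assoc _ _ _).symm
    _ = (q : ℂ) • (z j * (z 0 * star (z j))) := by
        rw [h.1 0 j hj0, smul_mul_assoc, mul_assoc]
    _ = ((q : ℂ) ^ 2) • (z j * star (z j) * z 0) := by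
        rw [h.2.1 0 j hj0.ne, mul_smul_comm, smul_smul, sq, mul_assoc]

theorem exists_aeval_resolution (h : SphereRel q z) (hq : q ∈ Set.Ioo (0 : ℝ) 1) (k : ℕ) :
    ∃ αp βp : ℂ[X], aeval (sphereTail z) αp * (z 0 ^ k * star (z 0) ^ k)
      + aeval (sphereTail z) βp * (star (z 0) * z 0) = 1 := by
  have hq0 : (q : ℂ) ^ 2 ≠ 0 := pow_ne_zero 2 (Complex.ofReal_ne_zero.2 hq.1.ne')
  have hnorm : ‖(q : ℂ) ^ 2‖ < 1 := by
    rw [norm_pow, Complex.norm_real, Real.norm_of_nonneg hq.1.le]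
    exact pow_lt_one₀ hq.1.le hq.2 two_ne_zero
  obtain ⟨αp, βp, hbez⟩ :=
    isCoprime_one_sub_C_inv_mul_X hq0 (qPochhammer_eval_self_ne_zero hnorm k)
  refine ⟨αp, βp, ?_⟩
  have hQ : star (z 0) * z 0 = aeval (sphereTail z) (1 - C ((q : ℂ) ^ 2)⁻¹ * X) := by
    rw [h.star_mul_z_zero, map_sub, map_one, map_mul, aeval_C, aeval_X, Algebra.smul_def]
  rw [pow_mul_pow_eq_aeval_qPochhammer h.z_zero_mul_sphereTail h.z_zero_mul_star, hQ,
    ← map_mul, ← map_mul, ← map_add, hbez, map_one]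

end SphereRel

end Sphere

theorem lens_grading_strong_general
    {n : ℕ} {A : Type} [Ring A] [Algebra ℂ A] [StarRing A]
    (q : ℝ) (hq : q ∈ Set.Ioo (0 : ℝ) 1)
    (z : Fin (n + 1) → A) (hrel : SphereRel q z)
    (N : ℕ) [NeZero N] (m : Fin (n + 1) → ℕ) (hm0 : m 0 = 1)
    (𝒜 : ZMod N → Submodule ℂ A)
    (hone : (1 : A) ∈ 𝒜 0)
    (hmul : ∀ g h, 𝒜 g * 𝒜 h ≤ 𝒜 (g + h))
    (hz : ∀ i, z i ∈ 𝒜 (m i : ZMod N))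
    (hzs : ∀ i, star (z i) ∈ 𝒜 (-(m i : ZMod N))) :
    let a : A := ∑ i ∈ Finset.Ioi (0 : Fin (n + 1)), z i * star (z i)
    (∀ g h, 𝒜 g * 𝒜 h = 𝒜 (g + h)) ∧
    ∃ α₀ α₁ β₀ β₁ : A,
      α₀ ∈ 𝒜 (-1) ∧ α₁ ∈ 𝒜 (-1) ∧ β₀ ∈ 𝒜 1 ∧ β₁ ∈ 𝒜 1 ∧
      α₀ * β₀ + α₁ * β₁ = 1 ∧
      ∃ αp βp : Polynomial ℂ,
        α₀ = Polynomial.aeval a αp * z 0 ^ (N - 1) ∧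
        α₁ = Polynomial.aeval a βp * star (z 0) ∧
        β₀ = (star (z 0)) ^ (N - 1) ∧ β₁ = z 0 ∧
        Polynomial.aeval a αp * (z 0 ^ (N - 1) * (star (z 0)) ^ (N - 1))
          + Polynomial.aeval a βp * (star (z 0) * z 0) = 1 := by
  intro a
  have : SetLike.GradedMonoid 𝒜 :=
    { one_mem := hone
      mul_mem := fun _ _ _ _ hx hy => hmul _ _ (Submodule.mul_mem_mul hx hy) }
  have hz0 : z 0 ∈ 𝒜 1 := by simpa [hm0] using hz 0
  have hz0s : star (z 0) ∈ 𝒜 (-1) := by simpa [hm0] using hzs 0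
  have ha : a ∈ 𝒜 0 :=
    Submodule.sum_mem _ fun i _ => by simpa using SetLike.mul_mem_graded (hz i) (hzs i)
  have hN : (N - 1 : ℕ) • (1 : ZMod N) = -1 := by simp [Nat.cast_sub NeZero.one_le]
  obtain ⟨αp, βp, hres⟩ : ∃ αp βp : ℂ[X],
      aeval a αp * (z 0 ^ (N - 1) * star (z 0) ^ (N - 1))
        + aeval a βp * (star (z 0) * z 0) = 1 :=
    hrel.exists_aeval_resolution hq (N - 1)
  have hα₀ : aeval a αp * z 0 ^ (N - 1) ∈ 𝒜 (-1) := by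
    simpa [hN] using SetLike.mul_mem_graded (SetLike.GradedMonoid.aeval_mem_zero 𝒜 ha αp)
      (SetLike.pow_mem_graded (N - 1) hz0)
  have hα₁ : aeval a βp * star (z 0) ∈ 𝒜 (-1) := by
    simpa using SetLike.mul_mem_graded (SetLike.GradedMonoid.aeval_mem_zero 𝒜 ha βp) hz0s
  have hβ₀ : star (z 0) ^ (N - 1) ∈ 𝒜 1 := by
    simpa [hN] using SetLike.pow_mem_graded (N - 1) hz0s
  have hres' : aeval a αp * z 0 ^ (N - 1) * star (z 0) ^ (N - 1)
      + aeval a βp * star (z 0) * z 0 = 1 := by simpa only [mul_assoc] using hres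
  refine ⟨ZMod.gradedMonoid_mul_eq_add_of_one_mem 𝒜 ?_, _, _, _, _, hα₀, hα₁, hβ₀, hz0, hres',
    αp, βp, rfl, rfl, rfl, rfl, hres⟩
  exact hres' ▸ add_mem (Submodule.mul_mem_mul hα₀ hβ₀) (Submodule.mul_mem_mul hα₁ hz0)

/-- the ℤ_N-grading of O(S_q^{2n+1}) with |z_0| = 1 mod N,
|z_i| = m_i mod N is strong, with an explicit resolution of identity
α₀β₀ + α₁β₁ = 1, α₀ = α(a)z_0^{N−1}, α₁ = β(a)z_0*, β₀ = z_0*^{N−1}, β₁ = z_0. -/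
theorem lens_grading_strong
    {n : ℕ} {A : Type} [Ring A] [Algebra ℂ A] [StarRing A]
    (q : ℝ) (hq : q ∈ Set.Ioo (0 : ℝ) 1)
    (z : Fin (n + 1) → A) (hrel : SphereRel q z)
    (hgen : Algebra.adjoin ℂ (Set.range z ∪ Set.range fun i => star (z i)) = ⊤)
    (N : ℕ) [NeZero N] (m : Fin (n + 1) → ℕ) (hm0 : m 0 = 1)
    (𝒜 : ZMod N → Submodule ℂ A)
    (hinternal : DirectSum.IsInternal 𝒜)
    (hone : (1 : A) ∈ 𝒜 0)
    (hmul : ∀ g h, 𝒜 g * 𝒜 h ≤ 𝒜 (g + h))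
    (hz : ∀ i, z i ∈ 𝒜 (m i : ZMod N))
    (hzs : ∀ i, star (z i) ∈ 𝒜 (-(m i : ZMod N))) :
    let a : A := ∑ i ∈ Finset.Ioi (0 : Fin (n + 1)), z i * star (z i)
    (∀ g h, 𝒜 g * 𝒜 h = 𝒜 (g + h)) ∧
    ∃ α₀ α₁ β₀ β₁ : A,
      α₀ ∈ 𝒜 (-1) ∧ α₁ ∈ 𝒜 (-1) ∧ β₀ ∈ 𝒜 1 ∧ β₁ ∈ 𝒜 1 ∧
      α₀ * β₀ + α₁ * β₁ = 1 ∧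
      ∃ αp βp : Polynomial ℂ,
        α₀ = Polynomial.aeval a αp * z 0 ^ (N - 1) ∧
        α₁ = Polynomial.aeval a βp * star (z 0) ∧
        β₀ = (star (z 0)) ^ (N - 1) ∧ β₁ = z 0 ∧
        Polynomial.aeval a αp * (z 0 ^ (N - 1) * (star (z 0)) ^ (N - 1))
          + Polynomial.aeval a βp * (star (z 0) * z 0) = 1 :=
  lens_grading_strong_general q hq z hrel N m hm0 𝒜 hone hmul hz hzs
end

section
/- For pairwise coprime positive integers m_0,...,m_n with each m_i ∈ {0,...,N−1}, the kernel of the group homomorphism Φ: ℤ^{N(n+1)} → ℤ^{N(n+1)} defined on generators λ_i^m (m = 0,...,N−1, i = 0,...,n) by Φ(λ_i^m) = ∑_{j=0}^{i} λ_j^{(m−m_j) mod N} − λ_i^m is a free abelian group of rank ∑_{i=0}^n gcd(N, m_i) − n. -/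
/-- The kernel of the homomorphism Φ : ℤ^{N(n+1)} → ℤ^{N(n+1)},
Φ(λ)_i^m = ∑_{j=0}^{i} λ_j^{(m−m_j) mod N} − λ_i^m, as an additive subgroup
of the group of functions Fin (n+1) → ZMod N → ℤ. -/
def kerPhi (N n : ℕ) [NeZero N] (mw : Fin (n + 1) → ℕ) :
    AddSubgroup (Fin (n + 1) → ZMod N → ℤ) where
  carrier := {x | ∀ (i : Fin (n + 1)) (m : ZMod N),
    ∑ j ∈ Finset.Iic i, x j (m - (mw j : ZMod N)) = x i m}
  zero_mem' := by intro i m; simp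
  add_mem' := by
    intro a b ha hb i m
    simp only [Pi.add_apply, Finset.sum_add_distrib]
    rw [ha i m, hb i m]
  neg_mem' := by
    intro a ha i m
    simp only [Pi.neg_apply, Finset.sum_neg_distrib]
    rw [ha i m]

/-!
Identify `ZMod N → ℤ` with `ℤ[X] / (X ^ N - 1)` by folding coefficients modulo `N`, so that
translation by `a` becomes multiplication by `X ^ a`. The equations defining `kerPhi` say that
`x 0` is invariant under translation by `m_0` and that `x (i - 1) = (1 - X ^ m_i) • x i`; hence an
element of the kernel is determined by a lift `F` of its last component, subject only to
`X ^ N - 1 ∣ (∏ i, (1 - X ^ m_i)) * F`.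

With `g_i = gcd N m_i`, the common part of `X ^ N - 1` and `∏ i, (1 - X ^ m_i)` is
`G = lcm_i (X ^ g_i - 1)`. As the `g_i` are pairwise coprime, the polynomials `X ^ g_i - 1` pairwise
share only the factor `X - 1`, so `G = (X - 1) * ∏ i, (X ^ g_i - 1) / (X - 1)` has degree
`1 + ∑ i, (g_i - 1) = ∑ i, g_i - n`. Since `X ^ N - 1 = G * q` is squarefree, `q` is coprime to
`∏ i, (1 - X ^ m_i)`, and the condition on `F` becomes `q ∣ F`. Writing `F = q * H` with
`deg H < deg G` parametrizes the kernel freely by the coefficients of `H`.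
-/

open Polynomial Finset

theorem dvd_pow_gcd_sub_one {R : Type*} [CommRing R] {d x : R} {a b : ℕ}
    (ha : d ∣ x ^ a - 1) (hb : d ∣ x ^ b - 1) : d ∣ x ^ a.gcd b - 1 := by
  simp only [← Ideal.Quotient.eq_zero_iff_dvd, map_sub, map_pow, map_one, sub_eq_zero] at *
  exact pow_gcd_eq_one.mpr ⟨ha, hb⟩

namespace Polynomial

section XPowSubOne

variable {R : Type*} [CommRing R]

theorem monic_X_sub_one : (X - 1 : R[X]).Monic := by
  simpa using monic_X_sub_C (1 : R)

theorem natDegree_X_sub_one [Nontrivial R] : (X - 1 : R[X]).natDegree = 1 := by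
  simpa using natDegree_X_sub_C (1 : R)

theorem natDegree_X_pow_sub_one [Nontrivial R] (n : ℕ) : (X ^ n - 1 : R[X]).natDegree = n := by
  simpa using natDegree_X_pow_sub_C (n := n) (r := (1 : R))

theorem geom_sum_X_dvd_X_pow_sub_one (a : ℕ) : ∑ k ∈ range a, (X : R[X]) ^ k ∣ X ^ a - 1 :=
  ⟨X - 1, (geom_sum_mul X a).symm⟩

theorem Monic.squarefree_of_squarefree_map {S : Type*} [CommRing S] [IsDomain S] {f : R →+* S}
    (hf : Function.Injective f) {p : R[X]} (hp : p.Monic) (h : Squarefree (p.map f)) :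
    Squarefree p := by
  intro d hd
  have hunit : IsUnit (d.map f) :=
    h _ (by simpa only [Polynomial.map_mul] using Polynomial.map_dvd f hd)
  have hdeg : d.natDegree = 0 := by
    rw [← natDegree_map_eq_of_injective hf]
    exact natDegree_eq_zero_of_isUnit hunit
  rw [eq_C_of_natDegree_eq_zero hdeg] at hd ⊢
  refine isUnit_C.mpr (isUnit_of_dvd_one ?_)
  simpa [hp.coeff_natDegree] using
    (C_dvd_iff_dvd_coeff _ _).mp (dvd_of_mul_left_dvd hd) p.natDegree

variable [IsDomain R]

theorem geom_sum_X_dvd_geom_sum_X {a b : ℕ} (hab : a ∣ b) :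
    ∑ k ∈ range a, (X : R[X]) ^ k ∣ ∑ k ∈ range b, X ^ k := by
  rw [← mul_dvd_mul_iff_left monic_X_sub_one.ne_zero, mul_comm, geom_sum_mul, mul_comm,
    geom_sum_mul]
  exact dvd_pow_sub_one_of_dvd hab

variable [CharZero R]

theorem squarefree_X_pow_sub_one {N : ℕ} (hN : N ≠ 0) : Squarefree (X ^ N - 1 : R[X]) := by
  refine Monic.squarefree_of_squarefree_map (IsFractionRing.injective R (FractionRing R))
    (leadingCoeff_X_pow_sub_one (Nat.pos_of_ne_zero hN)) ?_
  simpa using (separable_X_pow_sub_C (1 : FractionRing R) (by exact_mod_cast hN)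
    one_ne_zero).squarefree

theorem isRelPrime_geom_sum_X {a b : ℕ} (ha : a ≠ 0) (hab : a.Coprime b) :
    IsRelPrime (∑ k ∈ range a, (X : R[X]) ^ k) (∑ k ∈ range b, X ^ k) := by
  intro d hda hdb
  have hd : d ∣ X - C 1 := by
    simpa [hab] using dvd_pow_gcd_sub_one (hda.trans (geom_sum_X_dvd_X_pow_sub_one a))
      (hdb.trans (geom_sum_X_dvd_X_pow_sub_one b))
  have hcop : IsRelPrime (X - C 1) (∑ k ∈ range a, (X : R[X]) ^ k) := by
    rw [(irreducible_X_sub_C 1).isRelPrime_iff_not_dvd, dvd_iff_isRoot]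
    simpa [IsRoot, eval_finsetSum] using ha
  exact hcop hd hda

end XPowSubOne

section FoldCoeffs

variable {R : Type*} [CommRing R] {N : ℕ}

variable (N) in
/-- The quotient map `R[X] → R[X] / (X ^ N - 1) ≃ R[ZMod N]`: the value at `m` is the sum of the
coefficients in degrees congruent to `m` modulo `N`. -/
noncomputable def foldCoeffs : R[X] →ₗ[R] ZMod N → R :=
  lsum fun k => LinearMap.single R (fun _ => R) (k : ZMod N)

theorem foldCoeffs_monomial (k : ℕ) (c : R) :
    foldCoeffs N (monomial k c) = Pi.single (k : ZMod N) c := by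
  simp [foldCoeffs, sum_monomial_index]

theorem foldCoeffs_X_pow_mul_apply (a : ℕ) (F : R[X]) (m : ZMod N) :
    foldCoeffs N (X ^ a * F) m = foldCoeffs N F (m - a) := by
  induction F using Polynomial.induction_on' with
  | add p q hp hq => simp only [mul_add, map_add, Pi.add_apply, hp, hq]
  | monomial k c =>
    rw [X_pow_eq_monomial, monomial_mul_monomial, one_mul, foldCoeffs_monomial,
      foldCoeffs_monomial, Pi.single_apply, Pi.single_apply, Nat.cast_add]
    simp only [sub_eq_iff_eq_add']

theorem foldCoeffs_one_sub_X_pow_mul_apply (a : ℕ) (F : R[X]) (m : ZMod N) :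
    foldCoeffs N ((1 - X ^ a) * F) m = foldCoeffs N F m - foldCoeffs N F (m - a) := by
  rw [sub_mul, one_mul, map_sub, Pi.sub_apply, foldCoeffs_X_pow_mul_apply]

theorem foldCoeffs_X_pow_sub_one_mul (F : R[X]) : foldCoeffs N ((X ^ N - 1) * F) = 0 := by
  ext m
  rw [← neg_sub, neg_mul, map_neg, Pi.neg_apply, foldCoeffs_one_sub_X_pow_mul_apply,
    ZMod.natCast_self, sub_zero, sub_self, neg_zero, Pi.zero_apply]

theorem foldCoeffs_natCast_of_degree_lt {F : R[X]} (hF : F.degree < N) {k : ℕ} (hk : k < N) :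
    foldCoeffs N F k = F.coeff k := by
  have hlt : ∀ j ∈ F.support, j < N := fun j hj =>
    by exact_mod_cast (le_degree_of_mem_supp j hj).trans_lt hF
  rw [foldCoeffs, lsum_apply, Polynomial.sum_def, Finset.sum_apply, Finset.sum_eq_single k]
  · simp
  · intro j hj hjk
    have : (j : ZMod N) ≠ k := fun h => hjk <| by
      simpa [ZMod.val_cast_of_lt (hlt j hj), ZMod.val_cast_of_lt hk] using congrArg ZMod.val h
    simp [this.symm]
  · intro hk
    simp [notMem_support_iff.mp hk]

theorem eq_zero_of_foldCoeffs_eq_zero {F : R[X]} (hF : F.degree < N)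
    (h : foldCoeffs N F = 0) : F = 0 := by
  ext k
  rw [coeff_zero]
  rcases lt_or_ge k N with hk | hk
  · rw [← foldCoeffs_natCast_of_degree_lt hF hk, h, Pi.zero_apply]
  · exact coeff_eq_zero_of_degree_lt (hF.trans_le (by exact_mod_cast hk))

variable [NeZero N]

theorem foldCoeffs_eq_zero_iff {F : R[X]} : foldCoeffs N F = 0 ↔ X ^ N - 1 ∣ F := by
  have hmonic : (X ^ N - 1 : R[X]).Monic := leadingCoeff_X_pow_sub_one (NeZero.pos N)
  refine ⟨fun h => ?_, ?_⟩
  · nontriviality R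
    rw [← modByMonic_eq_zero_iff_dvd hmonic]
    refine eq_zero_of_foldCoeffs_eq_zero (N := N) ?_ ?_
    · exact (degree_modByMonic_lt F hmonic).trans_le (by compute_degree!)
    · rw [modByMonic_eq_sub_mul_div, map_sub, h, foldCoeffs_X_pow_sub_one_mul, sub_zero]
  · rintro ⟨G, rfl⟩
    exact foldCoeffs_X_pow_sub_one_mul G

theorem foldCoeffs_surjective : Function.Surjective (foldCoeffs (R := R) N) := by
  intro f
  refine ⟨∑ m : ZMod N, monomial m.val (f m), ?_⟩
  ext m
  simp [foldCoeffs_monomial, Pi.single_apply]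

end FoldCoeffs

section LcmPoly

variable {ι : Type*} [Fintype ι] {N : ℕ} {m : ι → ℕ}

variable (N m) in
/-- For pairwise coprime `m i`, this is `lcm_i (X ^ gcd N (m i) - 1)`. -/
noncomputable def lcmPoly : ℤ[X] := (X - 1) * ∏ i, ∑ k ∈ range (N.gcd (m i)), X ^ k

variable (N m) in
noncomputable def lcmCofactor : ℤ[X] := (X ^ N - 1) /ₘ lcmPoly N m

theorem lcmPoly_monic (hN : N ≠ 0) : (lcmPoly N m).Monic :=
  monic_X_sub_one.mul <| monic_prod_of_monic _ _ fun _ _ =>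
    monic_geom_sum_X (Nat.gcd_ne_zero_left hN)

theorem natDegree_lcmPoly (hN : N ≠ 0) :
    (lcmPoly N m).natDegree + Fintype.card ι = ∑ i, N.gcd (m i) + 1 := by
  have hmonic i := monic_geom_sum_X (R := ℤ) (Nat.gcd_ne_zero_left hN : N.gcd (m i) ≠ 0)
  have hdeg i : (∑ k ∈ range (N.gcd (m i)), (X : ℤ[X]) ^ k).natDegree + 1 = N.gcd (m i) := by
    have := congrArg natDegree (geom_sum_mul (X : ℤ[X]) (N.gcd (m i)))
    rwa [(hmonic i).natDegree_mul monic_X_sub_one, natDegree_X_sub_one,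
      natDegree_X_pow_sub_one] at this
  rw [lcmPoly, monic_X_sub_one.natDegree_mul (monic_prod_of_monic _ _ fun i _ => hmonic i),
    natDegree_X_sub_one, natDegree_prod_of_monic _ _ fun i _ => hmonic i,
    ← Finset.sum_congr rfl fun i _ => hdeg i, Finset.sum_add_distrib, Finset.sum_const,
    Finset.card_univ, smul_eq_mul, mul_one]
  ring

theorem X_pow_gcd_sub_one_dvd_lcmPoly (i : ι) : X ^ N.gcd (m i) - 1 ∣ lcmPoly N m := by
  classical
  rw [lcmPoly, ← Finset.mul_prod_erase _ _ (Finset.mem_univ i), ← mul_assoc, mul_comm (X - 1),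
    geom_sum_mul]
  exact dvd_mul_right _ _

theorem lcmPoly_dvd_prod_one_sub_X_pow [Nonempty ι] : lcmPoly N m ∣ ∏ i, (1 - X ^ m i) :=
  calc lcmPoly N m ∣ ∏ i, (X - 1) * ∑ k ∈ range (N.gcd (m i)), (X : ℤ[X]) ^ k := by
        rw [prod_mul_distrib, prod_const, lcmPoly]
        exact mul_dvd_mul_right (dvd_pow_self _ Fintype.card_ne_zero) _
    _ ∣ ∏ i, (1 - X ^ m i) := prod_dvd_prod_of_dvd _ _ fun i _ => by
        rw [mul_comm, geom_sum_mul, dvd_sub_comm]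
        exact dvd_pow_sub_one_of_dvd (Nat.gcd_dvd_right _ _)

variable (hN : N ≠ 0) (hm : Pairwise fun i j => (m i).Coprime (m j))
include hN hm

theorem lcmPoly_dvd_X_pow_sub_one : lcmPoly N m ∣ X ^ N - 1 := by
  rw [lcmPoly, ← geom_sum_mul, mul_comm _ (X - 1)]
  refine mul_dvd_mul_left _ (Fintype.prod_dvd_of_isRelPrime (fun i j hij => ?_)
    fun i => geom_sum_X_dvd_geom_sum_X (Nat.gcd_dvd_left N (m i)))
  exact isRelPrime_geom_sum_X (Nat.gcd_ne_zero_left hN) <|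
    Nat.Coprime.of_dvd (Nat.gcd_dvd_right _ _) (Nat.gcd_dvd_right _ _) (hm hij)

theorem lcmPoly_mul_lcmCofactor : lcmPoly N m * lcmCofactor N m = X ^ N - 1 := by
  have := modByMonic_add_div (X ^ N - 1) (lcmPoly N m)
  rwa [(modByMonic_eq_zero_iff_dvd (lcmPoly_monic hN)).mpr (lcmPoly_dvd_X_pow_sub_one hN hm),
    zero_add] at this

theorem lcmCofactor_monic : (lcmCofactor N m).Monic :=
  (lcmPoly_monic hN).of_mul_monic_left <| by
    rw [lcmPoly_mul_lcmCofactor hN hm]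
    exact leadingCoeff_X_pow_sub_one (Nat.pos_of_ne_zero hN)

theorem isRelPrime_lcmCofactor_prod : IsRelPrime (lcmCofactor N m) (∏ i, (1 - X ^ m i)) := by
  have hrel : IsRelPrime (lcmPoly N m) (lcmCofactor N m) := .of_squarefree_mul <| by
    rw [lcmPoly_mul_lcmCofactor hN hm]
    exact squarefree_X_pow_sub_one hN
  refine IsRelPrime.prod_right fun i _ d hdq hdm => hrel ?_ hdq
  have hdN : d ∣ X ^ N - 1 := hdq.trans (lcmPoly_mul_lcmCofactor hN hm ▸ dvd_mul_left _ _)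
  exact (dvd_pow_gcd_sub_one hdN (dvd_sub_comm.mp hdm)).trans (X_pow_gcd_sub_one_dvd_lcmPoly i)

theorem X_pow_sub_one_dvd_prod_mul_iff [Nonempty ι] {F : ℤ[X]} :
    X ^ N - 1 ∣ (∏ i, (1 - X ^ m i)) * F ↔ lcmCofactor N m ∣ F := by
  constructor
  · intro h
    refine (isRelPrime_lcmCofactor_prod hN hm).dvd_of_dvd_mul_left (dvd_trans ?_ h)
    exact lcmPoly_mul_lcmCofactor hN hm ▸ dvd_mul_left _ _
  · rintro ⟨H, rfl⟩
    obtain ⟨w, hw⟩ := lcmPoly_dvd_prod_one_sub_X_pow (N := N) (m := m)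
    exact ⟨w * H, by rw [hw, ← lcmPoly_mul_lcmCofactor hN hm]; ring⟩

end LcmPoly

end Polynomial
section KerPhi

variable {N n : ℕ} {mw : Fin (n + 1) → ℕ}

variable (mw) in
noncomputable def tailProd (i : Fin (n + 1)) : ℤ[X] := ∏ j ∈ Ioi i, (1 - X ^ mw j)

theorem tailProd_last : tailProd mw (Fin.last n) = 1 := by
  rw [tailProd, Ioi_eq_empty.mpr fun j _ => Fin.le_last j, prod_empty]

theorem tailProd_castSucc (i : Fin n) :
    tailProd mw i.castSucc = (1 - X ^ mw i.succ) * tailProd mw i.succ := by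
  have : Ioi i.castSucc = Ici i.succ := by ext j; simp [Fin.castSucc_lt_iff_succ_le]
  rw [tailProd, tailProd, this, ← mul_prod_Ioi_eq_prod_Ici]

theorem one_sub_X_pow_mul_tailProd_zero :
    (1 - X ^ mw 0) * tailProd mw 0 = ∏ j, (1 - X ^ mw j) := by
  rw [tailProd, Fin.prod_Ioi_zero, Fin.prod_univ_succ]

variable (N mw) in
noncomputable def kerPhiParam : ℤ[X] →ₗ[ℤ] Fin (n + 1) → ZMod N → ℤ :=
  LinearMap.pi fun i =>
    (foldCoeffs N).comp (LinearMap.mulLeft ℤ (tailProd mw i * lcmCofactor N mw))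

theorem kerPhiParam_apply (H : ℤ[X]) (i : Fin (n + 1)) :
    kerPhiParam N mw H i = foldCoeffs N (tailProd mw i * (lcmCofactor N mw * H)) := by
  rw [← mul_assoc]
  rfl

variable [NeZero N]

theorem mem_kerPhi_iff {x : Fin (n + 1) → ZMod N → ℤ} :
    x ∈ kerPhi N n mw ↔ (∀ m, x 0 (m - mw 0) = x 0 m) ∧
      ∀ (i : Fin n) m, x i.castSucc m = x i.succ m - x i.succ (m - mw i.succ) := by
  have hsplit : ∀ (i : Fin n) (y : Fin (n + 1) → ℤ),
      ∑ j ∈ Iic i.succ, y j = y i.succ + ∑ j ∈ Iic i.castSucc, y j := by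
    intro i y
    have : Iio i.succ = Iic i.castSucc := by ext j; simp [Fin.le_castSucc_iff]
    rw [← add_sum_Iio_eq_sum_Iic, this]
  have hzero : Iic (0 : Fin (n + 1)) = {0} := Iic_bot
  constructor
  · intro h
    refine ⟨fun m => by simpa [hzero] using h 0 m, fun i m => ?_⟩
    have := h i.succ m
    rw [hsplit, h i.castSucc m] at this
    linarith
  · rintro ⟨h0, hs⟩ i
    induction i using Fin.induction with
    | zero => intro m; simpa [hzero] using h0 m
    | succ i ih => intro m; rw [hsplit, ih m, hs i m]; ring

theorem foldCoeffs_tailProd_mul_mem_kerPhi {F : ℤ[X]}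
    (hF : X ^ N - 1 ∣ (∏ j, (1 - X ^ mw j)) * F) :
    (fun i => foldCoeffs N (tailProd mw i * F)) ∈ kerPhi N n mw := by
  refine mem_kerPhi_iff.mpr ⟨fun m => ?_, fun i m => ?_⟩
  · have := congrFun (foldCoeffs_eq_zero_iff.mpr hF) m
    rw [← one_sub_X_pow_mul_tailProd_zero, mul_assoc, foldCoeffs_one_sub_X_pow_mul_apply,
      Pi.zero_apply, sub_eq_zero] at this
    exact this.symm
  · rw [tailProd_castSucc, mul_assoc, foldCoeffs_one_sub_X_pow_mul_apply]

theorem exists_foldCoeffs_tailProd_mul_of_mem_kerPhi {x : Fin (n + 1) → ZMod N → ℤ}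
    (hx : x ∈ kerPhi N n mw) :
    ∃ F : ℤ[X], X ^ N - 1 ∣ (∏ j, (1 - X ^ mw j)) * F ∧
      (fun i => foldCoeffs N (tailProd mw i * F)) = x := by
  obtain ⟨h0, hs⟩ := mem_kerPhi_iff.mp hx
  obtain ⟨F, hF⟩ := foldCoeffs_surjective (x (Fin.last n))
  have hxi : ∀ i, foldCoeffs N (tailProd mw i * F) = x i := by
    intro i
    induction i using Fin.reverseInduction with
    | last => rw [tailProd_last, one_mul, hF]
    | cast i ih =>
      ext m
      rw [tailProd_castSucc, mul_assoc, foldCoeffs_one_sub_X_pow_mul_apply, ih, hs i m]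
  refine ⟨F, foldCoeffs_eq_zero_iff.mp (funext fun m => ?_), funext hxi⟩
  rw [← one_sub_X_pow_mul_tailProd_zero, mul_assoc, foldCoeffs_one_sub_X_pow_mul_apply, hxi 0,
    h0 m, sub_self, Pi.zero_apply]

section Coprime

variable (hm : Pairwise fun i j => (mw i).Coprime (mw j))
include hm

theorem kerPhiParam_lcmPoly_mul (K : ℤ[X]) : kerPhiParam N mw (lcmPoly N mw * K) = 0 := by
  refine funext fun i => ?_
  rw [kerPhiParam_apply, show tailProd mw i * (lcmCofactor N mw * (lcmPoly N mw * K)) =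
    (lcmPoly N mw * lcmCofactor N mw) * (tailProd mw i * K) by ring,
    lcmPoly_mul_lcmCofactor (NeZero.ne N) hm, foldCoeffs_X_pow_sub_one_mul]
  rfl

theorem mem_kerPhi_iff_exists_kerPhiParam {x : Fin (n + 1) → ZMod N → ℤ} :
    x ∈ kerPhi N n mw ↔
      ∃ H ∈ degreeLT ℤ (lcmPoly N mw).natDegree, kerPhiParam N mw H = x := by
  have hG := lcmPoly_monic (m := mw) (NeZero.ne N)
  constructor
  · intro hx
    obtain ⟨F, hF, rfl⟩ := exists_foldCoeffs_tailProd_mul_of_mem_kerPhi hx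
    obtain ⟨H, rfl⟩ := (X_pow_sub_one_dvd_prod_mul_iff (NeZero.ne N) hm).mp hF
    refine ⟨H %ₘ lcmPoly N mw, ?_, ?_⟩
    · rw [mem_degreeLT, ← degree_eq_natDegree hG.ne_zero]
      exact degree_modByMonic_lt H hG
    · rw [modByMonic_eq_sub_mul_div, map_sub, kerPhiParam_lcmPoly_mul hm, sub_zero]
      exact funext fun i => kerPhiParam_apply H i
  · rintro ⟨H, -, rfl⟩
    have hF := (X_pow_sub_one_dvd_prod_mul_iff (NeZero.ne N) hm).mpr (dvd_mul_right _ H)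
    convert foldCoeffs_tailProd_mul_mem_kerPhi hF using 1
    exact funext fun i => kerPhiParam_apply H i

theorem eq_zero_of_kerPhiParam_eq_zero {H : ℤ[X]}
    (hH : H ∈ degreeLT ℤ (lcmPoly N mw).natDegree)
    (h : kerPhiParam N mw H = 0) : H = 0 := by
  have hG := lcmPoly_monic (m := mw) (NeZero.ne N)
  have hq := lcmCofactor_monic (NeZero.ne N) hm
  have hdvd : X ^ N - 1 ∣ lcmCofactor N mw * H := by
    rw [← foldCoeffs_eq_zero_iff, ← one_mul (_ * H), ← tailProd_last, ← kerPhiParam_apply,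
      h]
    rfl
  rw [← lcmPoly_mul_lcmCofactor (NeZero.ne N) hm, mul_comm,
    mul_dvd_mul_iff_left hq.ne_zero] at hdvd
  refine eq_zero_of_dvd_of_degree_lt hdvd ?_
  rwa [degree_eq_natDegree hG.ne_zero, ← mem_degreeLT]

noncomputable def kerPhiEquivDegreeLT :
    kerPhi N n mw ≃+ degreeLT ℤ (lcmPoly N mw).natDegree :=
  let f := (kerPhiParam N mw).comp (degreeLT ℤ (lcmPoly N mw).natDegree).subtype
  have hf : Function.Injective f := (injective_iff_map_eq_zero f).mpr fun H h =>
    Subtype.ext (eq_zero_of_kerPhiParam_eq_zero hm H.2 h)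
  have hrange : (LinearMap.range f).toAddSubgroup = kerPhi N n mw := by
    ext x
    simp [f, mem_kerPhi_iff_exists_kerPhiParam hm]
  ((LinearEquiv.ofInjective f hf).toAddEquiv.trans (AddEquiv.addSubgroupCongr hrange)).symm

end Coprime

end KerPhi

theorem kernel_of_Phi_free_of_rank_general
    (N n : ℕ) [NeZero N] (mw : Fin (n + 1) → ℕ)
    (hcop : ∀ i j, i ≠ j → Nat.Coprime (mw i) (mw j)) :
    Nonempty ((kerPhi N n mw) ≃+ (Fin ((∑ i, Nat.gcd N (mw i)) - n) → ℤ)) := by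
  have hdeg : (lcmPoly N mw).natDegree = (∑ i, N.gcd (mw i)) - n := by
    have := natDegree_lcmPoly (m := mw) (NeZero.ne N)
    rw [Fintype.card_fin] at this
    omega
  rw [← hdeg]
  exact ⟨(kerPhiEquivDegreeLT fun i j => hcop i j).trans (degreeLTEquiv ℤ _).toAddEquiv⟩

/-- for pairwise coprime m_0,...,m_n ∈ {0,...,N−1}, the kernel of Φ is a
free abelian group of rank ∑_i gcd(N, m_i) − n. -/
theorem kernel_of_Phi_free_of_rank
    (N n : ℕ) [NeZero N] (mw : Fin (n + 1) → ℕ)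
    (hlt : ∀ i, mw i < N)
    (hcop : ∀ i j, i ≠ j → Nat.Coprime (mw i) (mw j)) :
    Nonempty ((kerPhi N n mw) ≃+ (Fin ((∑ i, Nat.gcd N (mw i)) - n) → ℤ)) :=
  kernel_of_Phi_free_of_rank_general N n mw hcop
end

section
/- The map z_i ↦ z_i for i ≠ n and z_n ↦ 0 defines a surjective *-algebra homomorphism O(S_q^{2n+1}) → O(S_q^{2n−1}) which preserves the ℤ-grading (|z_i| = 1 for i < n, |z_n| = m on the source; |z_i| = 1 on the target); consequently it restricts to a surjection from the quantum teardrop algebra O(𝕎ℙ^n_q(1,...,1,m)) onto the quantum projective space algebra O(ℂℙ_q^{n−1}). -/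
theorem Fin.sum_Ioi_castSucc_of_last_eq_zero {M : Type*} [AddCommMonoid M] {n : ℕ}
    (g : Fin (n + 1) → M) (hg : g (Fin.last n) = 0) (i : Fin n) :
    ∑ j ∈ Finset.Ioi i.castSucc, g j = ∑ j ∈ Finset.Ioi i, g j.castSucc := by
  have hIoi :
      Finset.Ioi i.castSucc = insert (Fin.last n) (Finset.Ioo i.castSucc (Fin.last n)) := by
    rw [Finset.Ioo_insert_right (Fin.castSucc_lt_last i)]
    ext j
    simp [Fin.le_last]
  rw [hIoi, Finset.sum_insert Finset.right_notMem_Ioo, hg, zero_add, ← Fin.map_castSuccEmb_Ioi,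
    Finset.sum_map]
  rfl

theorem SphereRel.snoc_zero {q : ℝ} {n : ℕ} {A : Type} [Ring A] [Algebra ℂ A] [StarRing A]
    {w : Fin (n + 1) → A} (hw : SphereRel q w) :
    SphereRel q (Fin.snoc w 0 : Fin (n + 2) → A) := by
  obtain ⟨hcomm, hcomm_star, hnormal, hsum⟩ := hw
  refine ⟨fun i j hij => ?_, fun i j hij => ?_, fun i => ?_, ?_⟩
  · induction j using Fin.lastCases with
    | last => simp
    | cast j =>
      induction i using Fin.lastCases with
      | last => exact absurd hij (Fin.castSucc_lt_last j).not_gt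
      | cast i => simpa using hcomm i j (Fin.castSucc_lt_castSucc_iff.1 hij)
  · induction i using Fin.lastCases with
    | last => simp
    | cast i =>
      induction j using Fin.lastCases with
      | last => simp
      | cast j => simpa using hcomm_star i j (by simpa using hij)
  · induction i using Fin.lastCases with
    | last => simp [show Finset.Ioi (Fin.last (n + 1)) = ∅ from Finset.Ioi_top]
    | cast i =>
      rw [Fin.sum_Ioi_castSucc_of_last_eq_zero _ (by simp)]
      simpa using hnormal i
  · simpa [Fin.sum_univ_castSucc] using hsum

theorem Submodule.iSup_eq_top_of_adjoin_eq_top {R A ι : Type*} [CommSemiring R] [Semiring A]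
    [Algebra R A] [AddMonoid ι] (S : ι → Submodule R A) (h1 : (1 : A) ∈ S 0)
    (hmul : ∀ g h, S g * S h ≤ S (g + h)) {s : Set A} (hs : s ⊆ ⋃ d, (S d : Set A))
    (hgen : Algebra.adjoin R s = ⊤) : ⨆ d, S d = ⊤ := by
  have hmul' : (⨆ d, S d) * (⨆ d, S d) ≤ ⨆ d, S d := by
    rw [Submodule.iSup_mul]
    refine iSup_le fun g => ?_
    rw [Submodule.mul_iSup]
    exact iSup_le fun h => (hmul g h).trans (le_iSup S (g + h))
  have hadjoin : Algebra.adjoin R s ≤ (⨆ d, S d).toSubalgebra (le_iSup S 0 h1)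
      fun _ _ hx hy => hmul' (Submodule.mul_mem_mul hx hy) :=
    Algebra.adjoin_le fun a ha => by
      obtain ⟨d, hd⟩ := Set.mem_iUnion.1 (hs ha)
      exact le_iSup S d hd
  rw [hgen] at hadjoin
  exact eq_top_iff.2 fun x _ => hadjoin Algebra.mem_top

section GradedAlgHom

variable {R A B ι : Type*} [CommRing R] [Ring A] [Algebra R A] [Ring B] [Algebra R B]
  [AddMonoid ι] (f : A →ₐ[R] B) {𝒜 : ι → Submodule R A} {ℬ : ι → Submodule R B}

theorem AlgHom.mapsTo_of_adjoin_eq_top (h𝒜 : iSupIndep 𝒜) (h𝒜one : (1 : A) ∈ 𝒜 0)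
    (h𝒜mul : ∀ g h, 𝒜 g * 𝒜 h ≤ 𝒜 (g + h)) (hℬone : (1 : B) ∈ ℬ 0)
    (hℬmul : ∀ g h, ℬ g * ℬ h ≤ ℬ (g + h)) {s : Set A} (hgen : Algebra.adjoin R s = ⊤)
    (hs : ∀ a ∈ s, ∃ d, a ∈ 𝒜 d ∧ f a ∈ ℬ d) (d : ι) : Set.MapsTo f (𝒜 d) (ℬ d) := by
  let S : ι → Submodule R A := fun d => 𝒜 d ⊓ (ℬ d).comap f.toLinearMap
  have hS : S = 𝒜 := by
    refine (h𝒜.le_iff_eq_of_iSup_eq_top ?_).1 fun d => inf_le_left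
    refine Submodule.iSup_eq_top_of_adjoin_eq_top S ⟨h𝒜one, ?_⟩
      (fun g h => Submodule.mul_le.2 fun x hx y hy =>
        ⟨h𝒜mul g h (Submodule.mul_mem_mul hx.1 hy.1), ?_⟩)
      (fun a ha => Set.mem_iUnion.2 (hs a ha)) hgen
    · simpa using hℬone
    · simpa using hℬmul g h (Submodule.mul_mem_mul hx.2 hy.2)
  intro x hx
  rw [← hS] at hx
  exact hx.2

theorem AlgHom.surjOn_of_adjoin_eq_top (hℬ : iSupIndep ℬ) (h𝒜one : (1 : A) ∈ 𝒜 0)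
    (h𝒜mul : ∀ g h, 𝒜 g * 𝒜 h ≤ 𝒜 (g + h)) (hℬone : (1 : B) ∈ ℬ 0)
    (hℬmul : ∀ g h, ℬ g * ℬ h ≤ ℬ (g + h)) {s : Set B} (hgen : Algebra.adjoin R s = ⊤)
    (hs : ∀ b ∈ s, ∃ d, b ∈ ℬ d ∧ ∃ a ∈ 𝒜 d, f a = b) (d : ι) : Set.SurjOn f (𝒜 d) (ℬ d) := by
  let T : ι → Submodule R B := fun d => ℬ d ⊓ (𝒜 d).map f.toLinearMap
  have hT : T = ℬ := by
    refine (hℬ.le_iff_eq_of_iSup_eq_top ?_).1 fun d => inf_le_left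
    refine Submodule.iSup_eq_top_of_adjoin_eq_top T ⟨hℬone, 1, h𝒜one, map_one f⟩
      (fun g h => Submodule.mul_le.2 fun x hx y hy =>
        ⟨hℬmul g h (Submodule.mul_mem_mul hx.1 hy.1), ?_⟩)
      (fun b hb => Set.mem_iUnion.2 (hs b hb)) hgen
    obtain ⟨a, ha, rfl⟩ := hx.2
    obtain ⟨b, hb, rfl⟩ := hy.2
    exact ⟨a * b, h𝒜mul g h (Submodule.mul_mem_mul ha hb), map_mul f a b⟩
  intro y hy
  rw [← hT] at hy
  exact hy.2

end GradedAlgHom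

theorem sphere_quotient_homomorphism_general
    {n : ℕ} {A B : Type} [Ring A] [Algebra ℂ A] [StarRing A]
    [Ring B] [Algebra ℂ B] [StarRing B]
    (q : ℝ)
    (z : Fin (n + 2) → A)
    (hgenA : Algebra.adjoin ℂ (Set.range z ∪ Set.range fun i => star (z i)) = ⊤)
    (hU : ∀ (C : Type) [Ring C] [Algebra ℂ C] [StarRing C] (v : Fin (n + 2) → C),
      SphereRel q v → ∃ f : A →⋆ₐ[ℂ] C, ∀ i, f (z i) = v i)
    (w : Fin (n + 1) → B) (hrelB : SphereRel q w)
    (hgenB : Algebra.adjoin ℂ (Set.range w ∪ Set.range fun i => star (w i)) = ⊤)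
    (m : ℕ)
    (𝒜 : ℤ → Submodule ℂ A)
    (hAinternal : DirectSum.IsInternal 𝒜) (hAone : (1 : A) ∈ 𝒜 0)
    (hAmul : ∀ g h, 𝒜 g * 𝒜 h ≤ 𝒜 (g + h))
    (hz : ∀ i : Fin (n + 1), z i.castSucc ∈ 𝒜 1)
    (hzn : z (Fin.last (n + 1)) ∈ 𝒜 (m : ℤ))
    (hzs : ∀ i : Fin (n + 1), star (z i.castSucc) ∈ 𝒜 (-1))
    (hzns : star (z (Fin.last (n + 1))) ∈ 𝒜 (-(m : ℤ)))
    (ℬ : ℤ → Submodule ℂ B)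
    (hBinternal : DirectSum.IsInternal ℬ) (hBone : (1 : B) ∈ ℬ 0)
    (hBmul : ∀ g h, ℬ g * ℬ h ≤ ℬ (g + h))
    (hw : ∀ i, w i ∈ ℬ 1) (hws : ∀ i, star (w i) ∈ ℬ (-1)) :
    ∃ f : A →⋆ₐ[ℂ] B,
      (∀ i : Fin (n + 1), f (z i.castSucc) = w i) ∧
      f (z (Fin.last (n + 1))) = 0 ∧
      Function.Surjective f ∧
      (∀ (d : ℤ), ∀ x ∈ 𝒜 d, f x ∈ ℬ d) ∧
      (∀ y ∈ ℬ 0, ∃ x ∈ 𝒜 0, f x = y) := by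
  obtain ⟨f, hf⟩ := hU B (Fin.snoc w 0) hrelB.snoc_zero
  have hf_castSucc : ∀ i, f (z i.castSucc) = w i := fun i => by simpa using hf i.castSucc
  have hf_last : f (z (Fin.last (n + 1))) = 0 := by simpa using hf (Fin.last _)
  have hf_star : ∀ i, f (star (z i.castSucc)) = star (w i) := by simp [map_star, hf_castSucc]
  refine ⟨f, hf_castSucc, hf_last, ?_, fun d => ?_, fun y hy => ?_⟩
  · rw [← StarAlgHom.coe_toAlgHom, ← AlgHom.range_eq_top, eq_top_iff, ← hgenB]
    refine Algebra.adjoin_le ?_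
    rintro _ (⟨i, rfl⟩ | ⟨i, rfl⟩)
    exacts [⟨_, hf_castSucc i⟩, ⟨_, hf_star i⟩]
  · refine f.toAlgHom.mapsTo_of_adjoin_eq_top hAinternal.submodule_iSupIndep hAone hAmul hBone
      hBmul hgenA ?_ d
    rintro _ (⟨i, rfl⟩ | ⟨i, rfl⟩) <;> induction i using Fin.lastCases
    · exact ⟨m, hzn, by simp [hf_last]⟩
    · exact ⟨1, hz _, by simpa [hf_castSucc] using hw _⟩
    · exact ⟨-m, hzns, by simp [map_star, hf_last]⟩
    · exact ⟨-1, hzs _, by simpa [hf_star] using hws _⟩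
  · refine f.toAlgHom.surjOn_of_adjoin_eq_top hBinternal.submodule_iSupIndep hAone hAmul hBone
      hBmul hgenB ?_ 0 hy
    rintro _ (⟨i, rfl⟩ | ⟨i, rfl⟩)
    exacts [⟨1, hw i, _, hz i, hf_castSucc i⟩, ⟨-1, hws i, _, hzs i, hf_star i⟩]

/-- the assignment z_i ↦ z_i (i ≠ n), z_n ↦ 0 defines a surjective
*-algebra homomorphism O(S_q^{2(n+1)+1}) → O(S_q^{2(n+1)−1}) which preserves the
ℤ-grading, and hence restricts to a surjection of the quantum teardrop algebra
onto the quantum complex projective space algebra.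
Here A is the quantum sphere algebra with generators z (encoded via the sphere
relations, generation and the universal property hU), and B is a *-algebra with
generators w satisfying the lower-dimensional sphere relations. -/
theorem sphere_quotient_homomorphism
    {n : ℕ} {A B : Type} [Ring A] [Algebra ℂ A] [StarRing A]
    [Ring B] [Algebra ℂ B] [StarRing B]
    (q : ℝ) (hq : q ∈ Set.Ioo (0 : ℝ) 1)
    (z : Fin (n + 2) → A) (hrel : SphereRel q z)
    (hgenA : Algebra.adjoin ℂ (Set.range z ∪ Set.range fun i => star (z i)) = ⊤)
    (hU : ∀ (C : Type) [Ring C] [Algebra ℂ C] [StarRing C] (v : Fin (n + 2) → C),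
      SphereRel q v → ∃ f : A →⋆ₐ[ℂ] C, ∀ i, f (z i) = v i)
    (w : Fin (n + 1) → B) (hrelB : SphereRel q w)
    (hgenB : Algebra.adjoin ℂ (Set.range w ∪ Set.range fun i => star (w i)) = ⊤)
    (m : ℕ) (hm : 0 < m)
    (𝒜 : ℤ → Submodule ℂ A)
    (hAinternal : DirectSum.IsInternal 𝒜) (hAone : (1 : A) ∈ 𝒜 0)
    (hAmul : ∀ g h, 𝒜 g * 𝒜 h ≤ 𝒜 (g + h))
    (hz : ∀ i : Fin (n + 1), z i.castSucc ∈ 𝒜 1)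
    (hzn : z (Fin.last (n + 1)) ∈ 𝒜 (m : ℤ))
    (hzs : ∀ i : Fin (n + 1), star (z i.castSucc) ∈ 𝒜 (-1))
    (hzns : star (z (Fin.last (n + 1))) ∈ 𝒜 (-(m : ℤ)))
    (ℬ : ℤ → Submodule ℂ B)
    (hBinternal : DirectSum.IsInternal ℬ) (hBone : (1 : B) ∈ ℬ 0)
    (hBmul : ∀ g h, ℬ g * ℬ h ≤ ℬ (g + h))
    (hw : ∀ i, w i ∈ ℬ 1) (hws : ∀ i, star (w i) ∈ ℬ (-1)) :
    ∃ f : A →⋆ₐ[ℂ] B,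
      (∀ i : Fin (n + 1), f (z i.castSucc) = w i) ∧
      f (z (Fin.last (n + 1))) = 0 ∧
      Function.Surjective f ∧
      (∀ (d : ℤ), ∀ x ∈ 𝒜 d, f x ∈ ℬ d) ∧
      (∀ y ∈ ℬ 0, ∃ x ∈ 𝒜 0, f x = y) :=
  sphere_quotient_homomorphism_general q z hgenA hU w hrelB hgenB m 𝒜 hAinternal hAone hAmul hz hzn
    hzs hzns ℬ hBinternal hBone hBmul hw hws
end
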